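/- Let p be a prime, L = ℓ₀ + ℓ₁∂ + … + ℓ_r∂^r with ℓ_i ∈ 𝔽_p[x], ℓ_r ≠ 0, and let A be its companion matrix with A₁ = A, A_{k+1} = A_k' + A·A_k. Then the p-curvature matrix A_p, written as B_p/ℓ_r^p with B_p = ℓ_r^p·A_p, is a polynomial matrix whose entries have degree at most d·p, where d bounds the degrees of the ℓ_i. -/

import Mathlib

open Polynomial

/-- Entrywise derivative on rational functions over `ZMod p`:
`(num/denom)' = (num' * denom - num * denom') / denom^2`. -/
noncomputable def ratDeriv {p : ℕ} [Fact p.Prime] (f : RatFunc (ZMod p)) : RatFunc (ZMod p) :=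
  algebraMap (Polynomial (ZMod p)) (RatFunc (ZMod p))
      (derivative f.num * f.denom - f.num * derivative f.denom) /
    algebraMap (Polynomial (ZMod p)) (RatFunc (ZMod p)) (f.denom ^ 2)

/-- Companion matrix of `L = ℓ₀ + ℓ₁ ∂ + ⋯ + ℓ_r ∂^r`. -/
noncomputable def companion (p r : ℕ) [Fact p.Prime] (ℓ : ℕ → Polynomial (ZMod p)) :
    Matrix (Fin r) (Fin r) (RatFunc (ZMod p)) :=
  fun i j =>
    if (j : ℕ) = r - 1 then
      - algebraMap (Polynomial (ZMod p)) (RatFunc (ZMod p)) (ℓ (i : ℕ)) /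
          algebraMap (Polynomial (ZMod p)) (RatFunc (ZMod p)) (ℓ r)
    else if (i : ℕ) = (j : ℕ) + 1 then 1 else 0

/-- The sequence `A₁ = A`, `A_{k+1} = A_k' + A·A_k` (with `A₀ = I`). -/
noncomputable def Aseq {p r : ℕ} [Fact p.Prime]
    (A : Matrix (Fin r) (Fin r) (RatFunc (ZMod p))) :
    ℕ → Matrix (Fin r) (Fin r) (RatFunc (ZMod p))
  | 0 => 1
  | 1 => A
  | (k + 2) => (Aseq A (k + 1)).map ratDeriv + A * Aseq A (k + 1)

/-!
Write every entry of `A_k` as `q / ℓ_r^k`. Each step `A_{k+1} = A_k' + A·A_k` multiplies the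
denominator by `ℓ_r` and raises the degree of the numerator by at most `d`: for `A·A_k` this is
clear, and for the derivative the quotient rule gives
`(q / c^k)' = (q' c - k q c') / c^(k+1)`, where the numerator again has degree at most `deg q + d`.
-/

section

variable {K : Type*} [Field K]

def HasNumeratorDegLE (b : K[X]) (n : ℕ) (f : RatFunc K) : Prop :=
  ∃ q : K[X], q.natDegree ≤ n ∧ algebraMap K[X] (RatFunc K) b * f = algebraMap K[X] (RatFunc K) q

namespace HasNumeratorDegLE

variable {b c : K[X]} {n m : ℕ} {f g : RatFunc K}

theorem zero (b : K[X]) (n : ℕ) : HasNumeratorDegLE b n 0 :=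
  ⟨0, by simp, by simp⟩

theorem add (hf : HasNumeratorDegLE b n f) (hg : HasNumeratorDegLE b n g) :
    HasNumeratorDegLE b n (f + g) := by
  obtain ⟨q, hq, hqf⟩ := hf
  obtain ⟨s, hs, hsg⟩ := hg
  exact ⟨q + s, natDegree_add_le_of_degree_le hq hs, by rw [mul_add, hqf, hsg, map_add]⟩

theorem sum {ι : Type*} {s : Finset ι} {f : ι → RatFunc K}
    (h : ∀ i ∈ s, HasNumeratorDegLE b n (f i)) : HasNumeratorDegLE b n (∑ i ∈ s, f i) :=
  Finset.sum_induction f _ (fun _ _ => add) (zero b n) h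

theorem mul (hf : HasNumeratorDegLE b n f) (hg : HasNumeratorDegLE c m g) :
    HasNumeratorDegLE (b * c) (n + m) (f * g) := by
  obtain ⟨q, hq, hqf⟩ := hf
  obtain ⟨s, hs, hsg⟩ := hg
  refine ⟨q * s, natDegree_mul_le_of_le hq hs, ?_⟩
  rw [map_mul, map_mul, ← hqf, ← hsg]
  ring

end HasNumeratorDegLE

end

section

variable {p : ℕ} [Fact p.Prime]

theorem ratDeriv_div (a : (ZMod p)[X]) {b : (ZMod p)[X]} (hb : b ≠ 0) :
    ratDeriv (algebraMap _ (RatFunc (ZMod p)) a / algebraMap _ _ b) =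
      algebraMap _ _ (derivative a * b - a * derivative b) / algebraMap _ _ (b ^ 2) := by
  set φ := algebraMap (ZMod p)[X] (RatFunc (ZMod p))
  have hinj : Function.Injective φ := RatFunc.algebraMap_injective (ZMod p)
  set f := φ a / φ b
  have hcross : f.num * b = a * f.denom := by
    have h := RatFunc.num_div_denom f
    rw [div_eq_div_iff (RatFunc.algebraMap_ne_zero f.denom_ne_zero)
      (RatFunc.algebraMap_ne_zero hb)] at h
    exact hinj (by rw [map_mul, map_mul]; exact h)
  have hcross' := congrArg derivative hcross
  simp only [derivative_mul] at hcross'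
  change φ _ / φ _ = φ _ / φ _
  rw [div_eq_div_iff (RatFunc.algebraMap_ne_zero (pow_ne_zero 2 f.denom_ne_zero))
    (RatFunc.algebraMap_ne_zero (pow_ne_zero 2 hb)), ← map_mul, ← map_mul]
  exact congrArg φ (by linear_combination (f.denom * b) * hcross' -
    (derivative f.denom * b + derivative b * f.denom) * hcross)

theorem HasNumeratorDegLE.ratDeriv {c : (ZMod p)[X]} {d k n : ℕ} {f : RatFunc (ZMod p)}
    (hc : c ≠ 0) (hcd : c.natDegree ≤ d) (hf : HasNumeratorDegLE (c ^ (k + 1)) n f) :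
    HasNumeratorDegLE (c ^ (k + 2)) (n + d) (_root_.ratDeriv f) := by
  obtain ⟨q, hq, hqf⟩ := hf
  have hck : algebraMap _ (RatFunc (ZMod p)) (c ^ (k + 1)) ≠ 0 :=
    RatFunc.algebraMap_ne_zero (pow_ne_zero _ hc)
  have hcd' : (derivative c).natDegree ≤ d := (natDegree_derivative_le c).trans (by omega)
  refine ⟨derivative q * c - C ((k + 1 : ℕ) : ZMod p) * q * derivative c, ?_, ?_⟩
  · exact (natDegree_sub_le_of_le (natDegree_mul_le_of_le
      ((natDegree_derivative_le q).trans (by omega)) hcd) (natDegree_mul_le_of_le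
      ((natDegree_C_mul_le _ q).trans hq) hcd')).trans (max_self _).le
  · have hf : f = algebraMap _ _ q / algebraMap _ _ (c ^ (k + 1)) :=
      eq_div_of_mul_eq hck (by rw [mul_comm, hqf])
    rw [hf, ratDeriv_div q (pow_ne_zero _ hc),
      ← mul_div_assoc, div_eq_iff (RatFunc.algebraMap_ne_zero (pow_ne_zero 2
        (pow_ne_zero _ hc))), ← map_mul, ← map_mul, derivative_pow_succ]
    congr 1
    push_cast
    ring

variable {r : ℕ}

theorem Aseq_add_two_apply (A : Matrix (Fin r) (Fin r) (RatFunc (ZMod p))) (k : ℕ)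
    (i j : Fin r) :
    Aseq A (k + 2) i j = ratDeriv (Aseq A (k + 1) i j) + ∑ m, A i m * Aseq A (k + 1) m j :=
  rfl

theorem hasNumeratorDegLE_Aseq {A : Matrix (Fin r) (Fin r) (RatFunc (ZMod p))}
    {c : (ZMod p)[X]} {d : ℕ} (hc : c ≠ 0) (hcd : c.natDegree ≤ d)
    (hA : ∀ i j, HasNumeratorDegLE c d (A i j)) (k : ℕ) (i j : Fin r) :
    HasNumeratorDegLE (c ^ (k + 1)) (d * (k + 1)) (Aseq A (k + 1) i j) := by
  induction k generalizing i j with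
  | zero => simpa [Aseq] using hA i j
  | succ k ih =>
    rw [Aseq_add_two_apply, mul_add_one d (k + 1)]
    refine ((ih i j).ratDeriv hc hcd).add (HasNumeratorDegLE.sum fun m _ => ?_)
    rw [pow_succ', add_comm (d * (k + 1)) d]
    exact (hA i m).mul (ih m j)

theorem hasNumeratorDegLE_companion {d : ℕ} {ℓ : ℕ → (ZMod p)[X]}
    (hdeg : ∀ i ≤ r, (ℓ i).natDegree ≤ d) (hlr : ℓ r ≠ 0) (i j : Fin r) :
    HasNumeratorDegLE (ℓ r) d (companion p r ℓ i j) := by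
  unfold companion
  split_ifs
  · refine ⟨-ℓ i, by simpa using hdeg i i.2.le, ?_⟩
    rw [map_neg, mul_div_cancel₀ _ (RatFunc.algebraMap_ne_zero hlr)]
  · exact ⟨ℓ r, hdeg r le_rfl, mul_one _⟩
  · exact ⟨0, by simp, by simp⟩

end

theorem stmt1_general (p d r : ℕ) [Fact p.Prime]
    (ℓ : ℕ → Polynomial (ZMod p)) (hdeg : ∀ i ≤ r, (ℓ i).natDegree ≤ d) (hlr : ℓ r ≠ 0)
    (i j : Fin r) :
    ∃ q : Polynomial (ZMod p), q.natDegree ≤ d * p ∧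
      algebraMap (Polynomial (ZMod p)) (RatFunc (ZMod p)) (ℓ r ^ p) *
        Aseq (companion p r ℓ) p i j =
      algebraMap (Polynomial (ZMod p)) (RatFunc (ZMod p)) q := by
  obtain ⟨k, rfl⟩ : ∃ k, p = k + 1 := Nat.exists_eq_add_one.mpr (Fact.out : p.Prime).pos
  exact hasNumeratorDegLE_Aseq hlr (hdeg r le_rfl) (hasNumeratorDegLE_companion hdeg hlr) k i j

/-- the p-curvature `A_p`, written as `B_p/ℓ_r^p` with `B_p = ℓ_r^p · A_p`,
is a polynomial matrix whose entries have degree at most `d·p`. -/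
theorem stmt1 (p d r : ℕ) [Fact p.Prime] (hr : 0 < r)
    (ℓ : ℕ → Polynomial (ZMod p)) (hdeg : ∀ i ≤ r, (ℓ i).natDegree ≤ d) (hlr : ℓ r ≠ 0)
    (i j : Fin r) :
    ∃ q : Polynomial (ZMod p), q.natDegree ≤ d * p ∧
      algebraMap (Polynomial (ZMod p)) (RatFunc (ZMod p)) (ℓ r ^ p) *
        Aseq (companion p r ℓ) p i j =
      algebraMap (Polynomial (ZMod p)) (RatFunc (ZMod p)) q :=
  stmt1_general p d r ℓ hdeg hlr i j
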